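/- Let A be a non-unital Banach algebra and let (G, 𝔄) be a Gelfand theory for A. Then for every a ∈ A, σ_A(a) = σ_𝔄(G(a)) ∪ {0}. -/

import Mathlib

open scoped Pointwise

/-- A `ℂ`-submodule `L` of a (possibly non-unital) algebra `A` is a left ideal if it is
closed under left multiplication by arbitrary elements of `A`. -/
def IsLeftIdeal {A : Type*} [NonUnitalNonAssocRing A] [Module ℂ A]
    (L : Submodule ℂ A) : Prop :=
  ∀ a : A, ∀ x ∈ L, a * x ∈ L

/-- A left ideal `L` is modular if there is a right modular identity `u`,
i.e. `a * u - a ∈ L` for all `a`. -/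
def IsModularLeft {A : Type*} [NonUnitalNonAssocRing A] [Module ℂ A]
    (L : Submodule ℂ A) : Prop :=
  ∃ u : A, ∀ a : A, a * u - a ∈ L

/-- `L` is a maximal modular left ideal: a proper modular left ideal which is maximal among
proper left ideals. -/
def IsMaximalModularLeftIdeal {A : Type*} [NonUnitalNonAssocRing A] [Module ℂ A]
    (L : Submodule ℂ A) : Prop :=
  IsLeftIdeal L ∧ IsModularLeft L ∧ L ≠ ⊤ ∧
    ∀ M : Submodule ℂ A, IsLeftIdeal M → M ≠ ⊤ → L ≤ M → M = L

/-- `(G, 𝔄)` is a Gelfand theory for `A`: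
(G1) `𝔄` is a C*-algebra and `G : A → 𝔄` is an algebra homomorphism;
(G2) `L ↦ G⁻¹(L)` is a bijection between the maximal modular left ideals of `𝔄` and of `A`;
(G3) for each maximal modular left ideal `L` of `𝔄`, the induced map `A/G⁻¹(L) → 𝔄/L` has
dense range; equivalently (via the open quotient map `𝔄 → 𝔄/L`), the set `G(A) + L` is
dense in `𝔄`. -/
def IsGelfandTheory {A 𝔄 : Type*}
    [NonUnitalNormedRing A] [NormedSpace ℂ A] [IsScalarTower ℂ A A] [SMulCommClass ℂ A A]
    [NonUnitalNormedRing 𝔄] [StarRing 𝔄] [CStarRing 𝔄] [NormedSpace ℂ 𝔄]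
    [IsScalarTower ℂ 𝔄 𝔄] [SMulCommClass ℂ 𝔄 𝔄] [StarModule ℂ 𝔄] [CompleteSpace 𝔄]
    (G : A →ₙₐ[ℂ] 𝔄) : Prop :=
  Set.BijOn (fun L : Submodule ℂ 𝔄 => L.comap (G : A →ₗ[ℂ] 𝔄))
      {L | IsMaximalModularLeftIdeal L} {L | IsMaximalModularLeftIdeal L} ∧
    ∀ L : Submodule ℂ 𝔄, IsMaximalModularLeftIdeal L →
      Dense (Set.range ⇑G + (L : Set 𝔄))

/-!
Away from `0`, membership in either quasispectrum is a failure of quasiregularity, which `G`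
preserves; the point is that it also reflects it. Since an element of a monoid with a left inverse
which itself has a left inverse is a unit, it suffices to show that `x` has a left quasi-inverse
whenever `G x` has one. If `x` has none, the left ideal `{a * x + a}` is proper and modular (with
identity `-x`), so it lies in a maximal modular left ideal, which is `G⁻¹(M)` for a maximal modular
left ideal `M` of `𝔄`. A left quasi-inverse of `G x` then forces `G x ∈ M`, hence `G(A) ⊆ M`, so `M`
contains the dense set `G(A) + M`. But maximal modular left ideals of a Banach algebra are closed:
elements of norm `< 1` are quasiregular, so a modular identity has distance `≥ 1` from a proper
modular left ideal.
-/

/-- `(1 + y) * (1 + x) = 1` in the unitization. -/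
def IsLeftQuasiregular {R : Type*} [NonUnitalRing R] (x : R) : Prop :=
  ∃ y : R, x + y + y * x = 0

section Quasiregular

open PreQuasiregular

variable {R : Type*} [NonUnitalRing R]

lemma IsQuasiregular.isLeftQuasiregular {x : R} (hx : IsQuasiregular x) : IsLeftQuasiregular x :=
  let ⟨y, _, hy⟩ := isQuasiregular_iff.mp hx
  ⟨y, hy⟩

lemma isQuasiregular_of_map {S F : Type*} [NonUnitalRing S] [FunLike F R S]
    [NonUnitalRingHomClass F R S] (f : F)
    (hf : ∀ x : R, IsLeftQuasiregular (f x) → IsLeftQuasiregular x) {x : R}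
    (hx : IsQuasiregular (f x)) : IsQuasiregular x := by
  obtain ⟨y, hyx⟩ := hf x hx.isLeftQuasiregular
  have hfyx : equiv (f y) * equiv (f x) = 1 := equiv.symm.injective (by simpa using congr_arg f hyx)
  obtain ⟨u, hu⟩ := isQuasiregular_iff'.mp hx
  have hfy : IsQuasiregular (f y) := by
    rw [← hu] at hfyx
    rw [isQuasiregular_iff', Units.eq_inv_of_mul_eq_one_right hfyx]
    exact u⁻¹.isUnit
  obtain ⟨z, hzy⟩ := hf y hfy.isLeftQuasiregular
  replace hyx : equiv y * equiv x = 1 := equiv.symm.injective hyx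
  replace hzy : equiv z * equiv y = 1 := equiv.symm.injective hzy
  have hzx : equiv z = equiv x := left_inv_eq_right_inv hzy hyx
  exact isQuasiregular_iff'.mpr (isUnit_iff_exists.mpr ⟨equiv y, hzx ▸ hzy, hyx⟩)

end Quasiregular

section LeftIdeal

variable {R : Type*}

lemma IsLeftIdeal.eq_top_of_modularUnit_mem [NonUnitalNonAssocRing R] [Module ℂ R]
    {L : Submodule ℂ R} (hL : IsLeftIdeal L) {u : R} (hu : ∀ a : R, a * u - a ∈ L) (huL : u ∈ L) : L = ⊤ :=
  Submodule.eq_top_iff'.mpr fun a => by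
    simpa using L.sub_mem (hL a u huL) (hu a)

lemma exists_isMaximalModularLeftIdeal_le [NonUnitalNonAssocRing R] [Module ℂ R]
    {L : Submodule ℂ R} (hL : IsLeftIdeal L) {u : R} (hu : ∀ a : R, a * u - a ∈ L)
    (huL : u ∉ L) : ∃ N, IsMaximalModularLeftIdeal N ∧ L ≤ N := by
  let S : Set (Submodule ℂ R) := {M | IsLeftIdeal M ∧ L ≤ M ∧ u ∉ M}
  have hchain : ∀ c ⊆ S, IsChain (· ≤ ·) c → ∀ M ∈ c, ∃ ub ∈ S, ∀ K ∈ c, K ≤ ub := by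
    intro c hcS hc M hM
    have mem_sSup : ∀ {z}, z ∈ sSup c ↔ ∃ K ∈ c, z ∈ K :=
      Submodule.mem_sSup_of_directed ⟨M, hM⟩ hc.directedOn
    refine ⟨sSup c, ⟨fun a z hz => ?_, (hcS hM).2.1.trans (le_sSup hM), fun hz => ?_⟩,
      fun K hK => le_sSup hK⟩
    · obtain ⟨K, hK, hzK⟩ := mem_sSup.mp hz
      exact le_sSup hK ((hcS hK).1 a z hzK)
    · obtain ⟨K, hK, huK⟩ := mem_sSup.mp hz
      exact (hcS hK).2.2 huK
  obtain ⟨N, hLN, hN⟩ := zorn_le_nonempty₀ S hchain L ⟨hL, le_rfl, huL⟩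
  obtain ⟨hNl, -, huN⟩ := hN.prop
  refine ⟨N, ⟨hNl, ⟨u, fun a => hLN (hu a)⟩, fun h => huN (h ▸ Submodule.mem_top), ?_⟩, hLN⟩
  intro M hMl hM hNM
  have huM : u ∉ M := fun h => hM (hMl.eq_top_of_modularUnit_mem (fun a => hNM (hLN (hu a))) h)
  exact le_antisymm (hN.2 ⟨hMl, hLN.trans hNM, huM⟩ hNM) hNM

lemma exists_isMaximalModularLeftIdeal_of_not_isLeftQuasiregular [NonUnitalRing R] [Module ℂ R]
    [IsScalarTower ℂ R R] {x : R} (hx : ¬ IsLeftQuasiregular x) :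
    ∃ N, IsMaximalModularLeftIdeal N ∧ ∀ a : R, a * x + a ∈ N := by
  let L := LinearMap.range (LinearMap.mulRight ℂ x + LinearMap.id)
  have mem_L : ∀ a : R, a * x + a ∈ L := fun a => ⟨a, rfl⟩
  have hL : IsLeftIdeal L := by
    rintro b _ ⟨a, rfl⟩
    simpa [mul_add, mul_assoc] using mem_L (b * a)
  have hu : ∀ a : R, a * -x - a ∈ L := fun a => by
    simpa only [mul_neg, neg_add'] using L.neg_mem (mem_L a)
  have hxL : -x ∉ L := by
    rintro ⟨y, hy⟩
    refine hx ⟨y, ?_⟩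
    have hy : y * x + y = -x := hy
    rw [add_assoc, add_comm y, hy, add_neg_cancel]
  obtain ⟨N, hN, hLN⟩ := exists_isMaximalModularLeftIdeal_le hL hu hxL
  exact ⟨N, hN, fun a => hLN (mem_L a)⟩

lemma IsLeftIdeal.mem_of_mul_self_add_mem [NonUnitalRing R] [Module ℂ R] {M : Submodule ℂ R}
    (hM : IsLeftIdeal M) {c : R} (hc : IsLeftQuasiregular c) (hcc : c * c + c ∈ M) : c ∈ M := by
  obtain ⟨y, hy⟩ := hc
  have key : c * c + c + y * (c * c + c) = c + (c + y + y * c) * c := by noncomm_ring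
  rw [hy, zero_mul, add_zero] at key
  exact key ▸ M.add_mem hcc (hM y _ hcc)

end LeftIdeal

section BanachAlgebra

variable {B : Type*} [NonUnitalNormedRing B] [NormedSpace ℂ B]

lemma IsLeftIdeal.topologicalClosure {L : Submodule ℂ B} (hL : IsLeftIdeal L) :
    IsLeftIdeal L.topologicalClosure := fun a =>
  Set.MapsTo.closure (fun z hz => hL a z hz) (continuous_const_mul a)

variable [IsScalarTower ℂ B B] [SMulCommClass ℂ B B] [CompleteSpace B]

open WithLp in
lemma isQuasiregular_neg_of_norm_lt_one {z : B} (hz : ‖z‖ < 1) : IsQuasiregular (-z) := by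
  rw [isQuasiregular_iff_isUnit' ℂ, Unitization.inr_neg, ← sub_eq_add_neg]
  let t : WithLp 1 (Unitization ℂ B) := toLp 1 (z : Unitization ℂ B)
  have ht : ‖t‖ < 1 := by rwa [unitization_norm_inr]
  have := (Units.oneSub t ht).isUnit.map (unitizationAlgEquiv (𝕜 := ℂ) (A := B) ℂ)
  rwa [Units.val_oneSub, map_sub, map_one] at this

lemma IsLeftIdeal.topologicalClosure_ne_top {L : Submodule ℂ B} (hL : IsLeftIdeal L) {u : B}
    (hu : ∀ a : B, a * u - a ∈ L) (hne : L ≠ ⊤) : L.topologicalClosure ≠ ⊤ := by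
  intro htop
  have hu' : u ∈ closure (L : Set B) := by
    rw [← Submodule.topologicalClosure_coe, htop]; exact Submodule.mem_top
  obtain ⟨l, hl, hdist⟩ := Metric.mem_closure_iff.mp hu' 1 one_pos
  obtain ⟨v, -, hv⟩ :=
    isQuasiregular_iff.mp (isQuasiregular_neg_of_norm_lt_one (z := u - l) (by rwa [← dist_eq_norm]))
  refine hne (Submodule.eq_top_iff'.mpr fun a => ?_)
  -- `w * (u - l) - w ∈ L` for every `w`, and `a = w - w * (u - l)` for `w = a + a * v`.
  have key : (a + a * v) * l - ((a + a * v) * u - (a + a * v)) =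
      a + a * (-(u - l) + v + v * -(u - l)) := by noncomm_ring
  rw [hv, mul_zero, add_zero] at key
  exact key ▸ L.sub_mem (hL _ l hl) (hu _)

lemma IsMaximalModularLeftIdeal.isClosed {M : Submodule ℂ B} (hM : IsMaximalModularLeftIdeal M) :
    IsClosed (M : Set B) := by
  obtain ⟨hl, ⟨u, hu⟩, hne, hmax⟩ := hM
  have hclosure : M.topologicalClosure = M :=
    hmax _ hl.topologicalClosure (hl.topologicalClosure_ne_top hu hne) M.le_topologicalClosure
  exact hclosure ▸ M.isClosed_topologicalClosure

end BanachAlgebra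

section GelfandTheory

variable {A 𝔄 : Type*}
    [NonUnitalNormedRing A] [NormedSpace ℂ A] [IsScalarTower ℂ A A] [SMulCommClass ℂ A A]
    [NonUnitalNormedRing 𝔄] [StarRing 𝔄] [CStarRing 𝔄] [NormedSpace ℂ 𝔄]
    [IsScalarTower ℂ 𝔄 𝔄] [SMulCommClass ℂ 𝔄 𝔄] [StarModule ℂ 𝔄] [CompleteSpace 𝔄]
    {G : A →ₙₐ[ℂ] 𝔄}

lemma IsGelfandTheory.isLeftQuasiregular_of_map (hG : IsGelfandTheory G) {x : A}
    (hx : IsLeftQuasiregular (G x)) : IsLeftQuasiregular x := by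
  by_contra h
  obtain ⟨N, hN, hxN⟩ := exists_isMaximalModularLeftIdeal_of_not_isLeftQuasiregular h
  obtain ⟨M, hM, rfl⟩ := hG.1.surjOn hN
  have hxM : ∀ a : A, G a * G x + G a ∈ M := fun a => by simpa using hxN a
  have hGx : G x ∈ M := hM.1.mem_of_mul_self_add_mem hx (hxM x)
  have hrange : Set.range G + (M : Set 𝔄) ⊆ M := by
    rintro _ ⟨_, ⟨a, rfl⟩, m, hm, rfl⟩
    have hGa : G a ∈ M := by simpa using M.sub_mem (hxM a) (hM.1 (G a) _ hGx)
    exact M.add_mem hGa hm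
  have hdense : closure (M : Set 𝔄) = Set.univ := ((hG.2 M hM).mono hrange).closure_eq
  rw [hM.isClosed.closure_eq] at hdense
  exact hM.2.2.1 (SetLike.coe_injective (hdense.trans Submodule.top_coe.symm))

lemma IsGelfandTheory.isQuasiregular_map_iff (hG : IsGelfandTheory G) {x : A} :
    IsQuasiregular (G x) ↔ IsQuasiregular x :=
  ⟨isQuasiregular_of_map G fun _ => hG.isLeftQuasiregular_of_map, fun h => h.map G⟩

end GelfandTheory

theorem stmt_6_general {A 𝔄 : Type*}
    [NonUnitalNormedRing A] [NormedSpace ℂ A] [IsScalarTower ℂ A A] [SMulCommClass ℂ A A]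
    [NonUnitalNormedRing 𝔄] [StarRing 𝔄] [CStarRing 𝔄] [NormedSpace ℂ 𝔄]
    [IsScalarTower ℂ 𝔄 𝔄] [SMulCommClass ℂ 𝔄 𝔄] [StarModule ℂ 𝔄] [CompleteSpace 𝔄]
    (G : A →ₙₐ[ℂ] 𝔄) (hG : IsGelfandTheory G) (a : A) :
    quasispectrum ℂ a = quasispectrum ℂ (G a) ∪ {0} := by
  ext r
  rcases eq_or_ne r 0 with rfl | hr
  · simp
  · simp only [Set.mem_union, Set.mem_singleton_iff, hr, or_false,
      quasispectrum.mem_iff_of_isUnit hr.isUnit, Units.smul_def, ← map_smul, ← map_neg,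
      hG.isQuasiregular_map_iff]

/-- If `A` is a non-unital Banach algebra and `(G, 𝔄)` a Gelfand theory for `A`, then
`σ_A(a) = σ_𝔄(G a) ∪ {0}` for every `a ∈ A`; here the spectra are taken in the respective
unitizations (`quasispectrum`). -/
theorem stmt_6 {A 𝔄 : Type*}
    [NonUnitalNormedRing A] [NormedSpace ℂ A] [IsScalarTower ℂ A A] [SMulCommClass ℂ A A]
    [CompleteSpace A]
    [NonUnitalNormedRing 𝔄] [StarRing 𝔄] [CStarRing 𝔄] [NormedSpace ℂ 𝔄]
    [IsScalarTower ℂ 𝔄 𝔄] [SMulCommClass ℂ 𝔄 𝔄] [StarModule ℂ 𝔄] [CompleteSpace 𝔄]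
    (hnu : ¬ ∃ e : A, ∀ x : A, e * x = x ∧ x * e = x)
    (G : A →ₙₐ[ℂ] 𝔄) (hG : IsGelfandTheory G) (a : A) :
    quasispectrum ℂ a = quasispectrum ℂ (G a) ∪ {0} :=
  stmt_6_general G hG a
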